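/- arXiv:1409.8085 — 5 statements merged into one kernel-verified Lean document; each statement's English description precedes it below -/
import Mathlib

section
/- Let α be a real symmetric positive definite 2s×2s matrix, defining an inner product α(z,z') = zᵀαz' on the symplectic space (ℝ^{2s}, Δ). Then there exists a symplectic matrix T (i.e., a real 2s×2s matrix with TᵀΔT = Δ) and positive real numbers α₁, …, α_s such that TᵀαT is the diagonal matrix diag(α₁, α₁, α₂, α₂, …, α_s, α_s). -/
/-!
Williamson's argument. If `Sᵀ α S = 1` (with `S` the inverse square root of `α`), then
`M = Sᵀ Δ S` is skew-symmetric and invertible. An injective skew-adjoint operator `f` has an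
orthonormal basis in which it is block-diagonal with blocks `d j • !![0, 1; -1, 0]`, `d j > 0`:
`f ∘ f` is symmetric, an eigenvector `e` of it spans together with `f e` an `f`-invariant plane, and
the orthogonal complement of that plane is again `f`-invariant. Conjugating by this orthogonal
basis and then rescaling each block by `(d j)^(-1/2)` turns `M` into `Δ` and `1` into
`diag (1 / d j)`.
-/

open Matrix

/-- The standard symplectic matrix `Δ` of a system of `s` modes: block-diagonal
with `s` copies of the 2×2 block `[[0,1],[-1,0]]`. -/
noncomputable def Sympl (s : ℕ) : Matrix (Fin 2 × Fin s) (Fin 2 × Fin s) ℝ :=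
  Matrix.blockDiagonal (fun _ => !![0, 1; -1, 0])

open Module
open scoped InnerProductSpace MatrixOrder

section SkewAdjoint

variable {E : Type*} [NormedAddCommGroup E] [InnerProductSpace ℝ E] {f : E →ₗ[ℝ] E}

lemma inner_self_map_eq_zero_of_skew (hf : ∀ x y, ⟪f x, y⟫_ℝ = -⟪x, f y⟫_ℝ) (x : E) :
    ⟪x, f x⟫_ℝ = 0 := by
  linarith [hf x x, real_inner_comm x (f x)]

lemma map_mem_orthogonal_of_skew (hf : ∀ x y, ⟪f x, y⟫_ℝ = -⟪x, f y⟫_ℝ) {U : Submodule ℝ E}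
    (hU : ∀ x ∈ U, f x ∈ U) : ∀ x ∈ Uᗮ, f x ∈ Uᗮ := by
  intro x hx
  rw [Submodule.mem_orthogonal'] at hx ⊢
  intro y hy
  rw [hf, hx _ (hU y hy), neg_zero]

lemma exists_orthonormal_pair_of_skew [FiniteDimensional ℝ E] [Nontrivial E]
    (hf : ∀ x y, ⟪f x, y⟫_ℝ = -⟪x, f y⟫_ℝ) (hinj : Function.Injective f) :
    ∃ p : Fin 2 → E, Orthonormal ℝ p ∧
      ∃ d : ℝ, 0 < d ∧ f (p 0) = -d • p 1 ∧ f (p 1) = d • p 0 := by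
  have hsymm : (f ∘ₗ f).IsSymmetric := fun x y => by
    simp only [LinearMap.comp_apply]
    rw [hf, hf x, neg_neg]
  obtain ⟨μ, hμ⟩ : ∃ μ, Module.End.HasEigenvalue (f ∘ₗ f) μ :=
    ⟨_, hsymm.hasEigenvalue_iSup_of_finiteDimensional⟩
  obtain ⟨v, hv⟩ := hμ.exists_hasEigenvector
  set e := ‖v‖⁻¹ • v
  have he : ‖e‖ = 1 := norm_smul_inv_norm hv.2
  have hffe : f (f e) = μ • e := by
    simp only [e, map_smul, ← LinearMap.comp_apply, hv.apply_eq_smul, smul_comm μ]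
  have hfe : f e ≠ 0 := (map_ne_zero_iff f hinj).2 (norm_ne_zero_iff.1 (by simp [he]))
  set d := ‖f e‖
  have hd : 0 < d := norm_pos_iff.2 hfe
  -- `μ = ⟪e, f (f e)⟫ = -‖f e‖²`
  have hμd : μ = -d ^ 2 := by
    have := hf e (f e)
    rw [hffe, real_inner_smul_right, real_inner_self_eq_norm_sq, real_inner_self_eq_norm_sq,
      he] at this
    linarith
  have hfee : ⟪f e, e⟫_ℝ = 0 := by
    rw [real_inner_comm, inner_self_map_eq_zero_of_skew hf]
  have hu : ‖d⁻¹ • f e‖ = 1 := by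
    rw [norm_smul, norm_inv, norm_norm, inv_mul_cancel₀ hd.ne']
  refine ⟨![d⁻¹ • f e, e], ?_, d, hd, ?_, ?_⟩
  · rw [orthonormal_iff_ite]
    intro i j
    fin_cases i <;> fin_cases j <;>
      simp [real_inner_smul_left, real_inner_smul_right, hfee, he, hu,
        inner_self_map_eq_zero_of_skew hf e]
  · simp [hffe, hμd, smul_smul, sq, hd.ne']
  · simp [smul_smul, hd.ne']

lemma Orthonormal.prod_finCases {ι : Type*} {s : ℕ} {p : ι → E} {q : ι × Fin s → E}
    (hp : Orthonormal ℝ p) (hq : Orthonormal ℝ q) (hpq : ∀ i k, ⟪p i, q k⟫_ℝ = 0) :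
    Orthonormal ℝ fun x : ι × Fin (s + 1) =>
      (Fin.cases (p x.1) (fun j => q (x.1, j)) x.2 : E) := by
  classical
  rw [orthonormal_iff_ite] at *
  rintro ⟨i, j⟩ ⟨i', j'⟩
  cases j using Fin.cases <;> cases j' using Fin.cases <;>
    simp [hp, hq, hpq, real_inner_comm (p _), Prod.ext_iff, (Fin.succ_ne_zero _).symm]

theorem exists_orthonormal_skew_normal_form [FiniteDimensional ℝ E]
    (hf : ∀ x y, ⟪f x, y⟫_ℝ = -⟪x, f y⟫_ℝ) (hinj : Function.Injective f) {s : ℕ}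
    (hs : finrank ℝ E = 2 * s) :
    ∃ b : Fin 2 × Fin s → E, Orthonormal ℝ b ∧ ∃ d : Fin s → ℝ, (∀ j, 0 < d j) ∧
      (∀ j, f (b (0, j)) = -d j • b (1, j)) ∧ ∀ j, f (b (1, j)) = d j • b (0, j) := by
  induction s generalizing E with
  | zero =>
    exact ⟨fun x => x.2.elim0, orthonormal_iff_ite.2 fun x => x.2.elim0, fun j => j.elim0,
      fun j => j.elim0, fun j => j.elim0, fun j => j.elim0⟩
  | succ s ih =>
    have : Nontrivial E := Module.nontrivial_of_finrank_pos (R := ℝ) (by omega)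
    obtain ⟨p, hp, d₀, hd₀, hp₀, hp₁⟩ := exists_orthonormal_pair_of_skew hf hinj
    set U := Submodule.span ℝ (Set.range p)
    have hpU : ∀ i, p i ∈ U := fun i => Submodule.subset_span ⟨i, rfl⟩
    have hU : ∀ x ∈ U, f x ∈ U := fun x hx => by
      refine (Submodule.span_le (p := U.comap f)).2 ?_ hx
      rintro _ ⟨i, rfl⟩
      fin_cases i
      · simpa [hp₀] using U.smul_mem (-d₀) (hpU 1)
      · simpa [hp₁] using U.smul_mem d₀ (hpU 0)
    have hrank : finrank ℝ Uᗮ = 2 * s := by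
      have := U.finrank_add_finrank_orthogonal
      rw [finrank_span_eq_card hp.linearIndependent, Fintype.card_fin] at this
      omega
    have hUorth := map_mem_orthogonal_of_skew hf hU
    obtain ⟨b, hb, d, hd, hb₀, hb₁⟩ := ih (f := f.restrict hUorth) (fun x y => hf x y)
      (fun x y hxy => Subtype.ext (hinj (congrArg Subtype.val hxy))) hrank
    refine ⟨fun x => Fin.cases (p x.1) (fun j => (b (x.1, j) : E)) x.2,
      hp.prod_finCases (hb.comp_linearIsometry Uᗮ.subtypeₗᵢ)
        (fun i k => U.inner_right_of_mem_orthogonal (hpU i) (b k).2),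
      Fin.cases d₀ d, Fin.cases hd₀ hd, Fin.cases hp₀ fun j => congrArg Subtype.val (hb₀ j),
      Fin.cases hp₁ fun j => congrArg Subtype.val (hb₁ j)⟩

end SkewAdjoint

lemma Matrix.transpose_mul_mul_of_cols_apply {m n : Type*} [Fintype m] [Fintype n]
    [DecidableEq m] (M : Matrix m m ℝ) (b : n → EuclideanSpace ℝ m) (p q : n) :
    ((of fun k l => b l k)ᵀ * M * of fun k l => b l k) p q = ⟪b p, toEuclideanLin M (b q)⟫_ℝ := by
  simp only [mul_apply, transpose_apply, of_apply, EuclideanSpace.inner_eq_star_dotProduct,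
    dotProduct, mulVec, Finset.sum_mul, toLpLin_apply, star_trivial]
  rw [Finset.sum_comm]
  exact Finset.sum_congr rfl fun _ _ => Finset.sum_congr rfl fun _ _ => by ring

lemma Matrix.exists_orthogonal_transpose_mul_mul_eq_blockDiagonal {s : ℕ}
    (M : Matrix (Fin 2 × Fin s) (Fin 2 × Fin s) ℝ) (hM : Mᵀ = -M) (hMdet : IsUnit M.det) :
    ∃ O : Matrix (Fin 2 × Fin s) (Fin 2 × Fin s) ℝ, Oᵀ * O = 1 ∧
      ∃ d : Fin s → ℝ, (∀ j, 0 < d j) ∧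
        Oᵀ * M * O = blockDiagonal fun j => d j • !![0, 1; -1, 0] := by
  set f := toEuclideanLin M
  have hf : ∀ x y, ⟪f x, y⟫_ℝ = -⟪x, f y⟫_ℝ := fun x y => by
    rw [← LinearMap.adjoint_inner_right, ← toEuclideanLin_conjTranspose_eq_adjoint,
      conjTranspose_eq_transpose_of_trivial, hM, map_neg, LinearMap.neg_apply, inner_neg_right]
  have hinj : Function.Injective f := fun x y hxy => by
    have := congrArg WithLp.ofLp hxy
    simp only [f, toLpLin_apply] at this
    exact WithLp.ofLp_injective 2
      (mulVec_injective_iff_isUnit.2 ((isUnit_iff_isUnit_det M).2 hMdet) this)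
  obtain ⟨b, hb, d, hd, hb₀, hb₁⟩ :=
    exists_orthonormal_skew_normal_form hf hinj (s := s) (by simp [finrank_euclideanSpace])
  refine ⟨of fun k l => b l k, ?_, d, hd, ?_⟩
  · ext p q
    rw [← Matrix.mul_one (of fun k l => b l k)ᵀ, transpose_mul_mul_of_cols_apply, one_apply]
    simpa using orthonormal_iff_ite.1 hb p q
  · ext ⟨i, j⟩ ⟨i', j'⟩
    rw [transpose_mul_mul_of_cols_apply, blockDiagonal_apply]
    fin_cases i <;> fin_cases i' <;> by_cases hj : j = j' <;>
      simp [f, hb₀, hb₁, real_inner_smul_right, orthonormal_iff_ite.1 hb, hb.1, hj]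

lemma sympl_transpose (s : ℕ) : (Sympl s)ᵀ = -Sympl s := by
  rw [Sympl, blockDiagonal_transpose, ← blockDiagonal_neg]
  congr 1
  ext : 1
  ext i j
  fin_cases i <;> fin_cases j <;> simp

lemma det_sympl (s : ℕ) : (Sympl s).det = 1 := by
  simp [Sympl, det_blockDiagonal, det_fin_two_of]

lemma Matrix.PosDef.exists_transpose_mul_mul_eq_one {n : Type*} [Fintype n] [DecidableEq n]
    {A : Matrix n n ℝ} (hA : A.PosDef) : ∃ S : Matrix n n ℝ, IsUnit S.det ∧ Sᵀ * A * S = 1 := by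
  have hA₀ : 0 ≤ A := hA.posSemidef.nonneg
  set R := CFC.sqrt A
  have hRsymm : Rᵀ = R := (CFC.sqrt_nonneg A).posSemidef.isHermitian
  have hR : IsUnit R.det := (isUnit_iff_isUnit_det R).1 ((CFC.isUnit_sqrt_iff A hA₀).2 hA.isUnit)
  refine ⟨R⁻¹, isUnit_nonsing_inv_det R hR, ?_⟩
  rw [transpose_nonsing_inv, hRsymm, ← CFC.sqrt_mul_sqrt_self A hA₀, Matrix.mul_assoc,
    Matrix.mul_assoc, mul_nonsing_inv R hR, Matrix.mul_one, nonsing_inv_mul R hR]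

lemma Matrix.diagonal_mul_blockDiagonal_mul_diagonal {α m o : Type*} [CommSemiring α] [Fintype m]
    [Fintype o] [DecidableEq m] [DecidableEq o] (c : o → α) (B : o → Matrix m m α) :
    diagonal (fun p : m × o => c p.2) * blockDiagonal B * diagonal (fun p => c p.2) =
      blockDiagonal fun j => (c j * c j) • B j := by
  ext ⟨i, j⟩ ⟨i', j'⟩
  simp only [diagonal_mul, mul_diagonal, blockDiagonal_apply, Matrix.smul_apply, smul_eq_mul]
  split_ifs with h
  · subst h; ring
  · simp

/-- For every real symmetric positive definite matrix `α` on the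
symplectic space `(ℝ^{2s}, Δ)` there is a symplectic matrix `T` (`TᵀΔT = Δ`) and
positive reals `α₁, …, α_s` such that `TᵀαT = diag(α₁, α₁, …, α_s, α_s)`. -/
theorem exists_symplectic_diagonalization (s : ℕ)
    (α : Matrix (Fin 2 × Fin s) (Fin 2 × Fin s) ℝ) (hα : α.PosDef) :
    ∃ T : Matrix (Fin 2 × Fin s) (Fin 2 × Fin s) ℝ,
      Tᵀ * Sympl s * T = Sympl s ∧
      ∃ a : Fin s → ℝ, (∀ j, 0 < a j) ∧
        Tᵀ * α * T = Matrix.diagonal (fun p => a p.2) := by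
  obtain ⟨S, hSdet, hSαS⟩ := hα.exists_transpose_mul_mul_eq_one
  have hskew : (Sᵀ * Sympl s * S)ᵀ = -(Sᵀ * Sympl s * S) := by
    simp [transpose_mul, sympl_transpose, Matrix.mul_assoc]
  have hdet : IsUnit (Sᵀ * Sympl s * S).det := by
    simpa [det_sympl] using hSdet.mul hSdet
  obtain ⟨O, hO, d, hd, hOMO⟩ := exists_orthogonal_transpose_mul_mul_eq_blockDiagonal _ hskew hdet
  set N := diagonal fun p : Fin 2 × Fin s => (√(d p.2))⁻¹
  have hconj : ∀ A, (S * O * N)ᵀ * A * (S * O * N) = N * (Oᵀ * (Sᵀ * A * S) * O) * N := by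
    simp [N, transpose_mul, Matrix.mul_assoc]
  have hsqrt : ∀ j, (√(d j))⁻¹ * (√(d j))⁻¹ = (d j)⁻¹ := fun j => by
    rw [← mul_inv, Real.mul_self_sqrt (hd j).le]
  refine ⟨S * O * N, ?_, fun j => (d j)⁻¹, fun j => inv_pos.2 (hd j), ?_⟩
  · rw [hconj, hOMO, diagonal_mul_blockDiagonal_mul_diagonal (fun j => (√(d j))⁻¹), Sympl]
    congr 1
    ext1 j
    rw [smul_smul, hsqrt, inv_mul_cancel₀ (hd j).ne', one_smul]
  · rw [hconj, hSαS, Matrix.mul_one, hO, Matrix.mul_one, diagonal_mul_diagonal]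
    simp only [hsqrt]
end

section
/- Let K be a real 2×2 matrix with det K > 0, and let J_B be a complex structure on (ℝ², Δ). Then J_A = K J_B K⁻¹ is again a complex structure on (ℝ², Δ); in particular, every nondegenerate single-mode Gaussian channel with positive det K is gauge-covariant (K J_B − J_A K = 0 with J_A a complex structure). -/
/-!
Every real `2 × 2` matrix `K` satisfies `Kᵀ Δ K = det K • Δ`, so conjugating `J` by `K`
turns `ΔJ` into `det K • K⁻ᵀ (ΔJ) K⁻¹`, a congruence scaled by a positive factor, which
preserves positive semidefiniteness. Since `Δ` is antisymmetric, symmetry of `ΔJ` is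
exactly `ΔJ = -JᵀΔ`.
-/

open Matrix

/-- The single-mode symplectic matrix `Δ = [[0,1],[-1,0]]`. -/
def Sympl1 : Matrix (Fin 2) (Fin 2) ℝ := !![0, 1; -1, 0]

/-- A real 2×2 matrix `J` is a complex structure with respect to `Δ` if
`J² = -I`, `ΔJ = -JᵀΔ`, and `ΔJ` is positive semidefinite. -/
def IsComplexStructure1 (J : Matrix (Fin 2) (Fin 2) ℝ) : Prop :=
  J * J = -1 ∧ Sympl1 * J = -(Jᵀ * Sympl1) ∧ (Sympl1 * J).PosSemidef

lemma transpose_sympl1 : Sympl1ᵀ = -Sympl1 := by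
  ext i j
  fin_cases i <;> fin_cases j <;> simp [Sympl1]

lemma transpose_mul_sympl1_mul_self (K : Matrix (Fin 2) (Fin 2) ℝ) :
    Kᵀ * Sympl1 * K = K.det • Sympl1 := by
  ext i j
  fin_cases i <;> fin_cases j <;>
    simp [Sympl1, mul_apply, Fin.sum_univ_two, det_fin_two] <;> ring

lemma sympl1_mul_conj {K : Matrix (Fin 2) (Fin 2) ℝ} (hK : IsUnit K.det)
    (J : Matrix (Fin 2) (Fin 2) ℝ) :
    Sympl1 * (K * J * K⁻¹) = K.det • (K⁻¹ᵀ * (Sympl1 * J) * K⁻¹) := by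
  have hKT : K⁻¹ᵀ * Kᵀ = 1 := by rw [← transpose_mul, mul_nonsing_inv K hK, transpose_one]
  calc Sympl1 * (K * J * K⁻¹) = (K⁻¹ᵀ * Kᵀ) * Sympl1 * K * J * K⁻¹ := by
        rw [hKT, Matrix.one_mul]; simp only [Matrix.mul_assoc]
    _ = K⁻¹ᵀ * (Kᵀ * Sympl1 * K) * J * K⁻¹ := by simp only [Matrix.mul_assoc]
    _ = K.det • (K⁻¹ᵀ * (Sympl1 * J) * K⁻¹) := by
        rw [transpose_mul_sympl1_mul_self]
        simp only [Matrix.mul_smul, Matrix.smul_mul, Matrix.mul_assoc]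

lemma sympl1_mul_eq_neg_transpose_mul_of_isHermitian {J : Matrix (Fin 2) (Fin 2) ℝ}
    (h : (Sympl1 * J).IsHermitian) : Sympl1 * J = -(Jᵀ * Sympl1) := by
  rw [IsHermitian, conjTranspose_eq_transpose_of_trivial, transpose_mul, transpose_sympl1] at h
  rw [← h, Matrix.mul_neg]

lemma conj_mul_conj {n R : Type*} [Fintype n] [DecidableEq n] [CommRing R]
    {K : Matrix n n R} (hK : IsUnit K.det) (J L : Matrix n n R) :
    (K * J * K⁻¹) * (K * L * K⁻¹) = K * (J * L) * K⁻¹ := by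
  simp only [Matrix.mul_assoc, nonsing_inv_mul_cancel_left K _ hK]

theorem IsComplexStructure1.conj {K J : Matrix (Fin 2) (Fin 2) ℝ} (hK : 0 < K.det)
    (hJ : IsComplexStructure1 J) : IsComplexStructure1 (K * J * K⁻¹) := by
  have hpsd : (Sympl1 * (K * J * K⁻¹)).PosSemidef := by
    rw [sympl1_mul_conj hK.ne'.isUnit, ← conjTranspose_eq_transpose_of_trivial]
    exact (hJ.2.2.conjTranspose_mul_mul_same K⁻¹).smul hK.le
  refine ⟨?_, sympl1_mul_eq_neg_transpose_mul_of_isHermitian hpsd.1, hpsd⟩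
  rw [conj_mul_conj hK.ne'.isUnit, hJ.1, Matrix.mul_neg, Matrix.mul_one, Matrix.neg_mul,
    mul_nonsing_inv K hK.ne'.isUnit]

/-- If `K` is a real 2×2 matrix with `det K > 0` and `J_B` is a
complex structure on `(ℝ², Δ)`, then `J_A = K J_B K⁻¹` is again a complex structure
and `K J_B - J_A K = 0`; that is, every nondegenerate single-mode Gaussian channel
with positive `det K` is gauge-covariant. -/
theorem conj_complexStructure_of_det_pos (K J_B : Matrix (Fin 2) (Fin 2) ℝ)
    (hK : 0 < K.det) (hJB : IsComplexStructure1 J_B) :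
    IsComplexStructure1 (K * J_B * K⁻¹) ∧
    K * J_B - (K * J_B * K⁻¹) * K = 0 :=
  ⟨hJB.conj hK, by rw [nonsing_inv_mul_cancel_right K _ hK.ne'.isUnit, sub_self]⟩
end

section
/- Let Δ be the 2s×2s matrix [[0, I],[−I, 0]] in s+s block form, let J_B = Δ⁻¹ (the canonical complex structure), let D be an invertible real s×s matrix, and let K be the block-diagonal matrix [[I, 0],[0, D]]. Then K J_B K⁻¹ is a complex structure with respect to Δ if and only if D is symmetric and positive definite. In particular, for s ≥ 2 and D nonsymmetric, the nondegenerate Gaussian channel with matrix K is not gauge-covariant with respect to the input complex structure K J_B K⁻¹ candidate. -/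
open Matrix

/-- The symplectic matrix `Δ = [[0, I],[-I, 0]]` in `s+s` block form (coordinates
rearranged as `(x₁,…,x_s,y₁,…,y_s)`). -/
def SymplB (s : ℕ) : Matrix (Fin s ⊕ Fin s) (Fin s ⊕ Fin s) ℝ :=
  Matrix.fromBlocks 0 1 (-1) 0

/-- A real `2s × 2s` matrix `J` is a complex structure with respect to `Δ` if
`J² = -I`, `ΔJ = -JᵀΔ`, and `ΔJ` is positive semidefinite. -/
def IsComplexStructureB {s : ℕ} (J : Matrix (Fin s ⊕ Fin s) (Fin s ⊕ Fin s) ℝ) : Prop :=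
  J * J = -1 ∧ SymplB s * J = -(Jᵀ * SymplB s) ∧ (SymplB s * J).PosSemidef

/-!
Conjugating `Δ⁻¹` by `K = [[I,0],[0,D]]` gives `J = [[0,-D⁻¹],[D,0]]`, which always squares
to `-I`, and `ΔJ = [[D,0],[0,D⁻¹]]`. Since `Δ` is antisymmetric, `ΔJ = -JᵀΔ` just says that
`ΔJ` is symmetric, which positive semidefiniteness already forces. So everything reduces to:
`[[D,0],[0,D⁻¹]]` is positive semidefinite iff `D` is positive definite, which follows from
restricting to the first block in one direction and from the Schur complement in the other.
-/

section Blocks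

open scoped ComplexOrder

variable {n : Type*} [Fintype n] [DecidableEq n]

theorem fromBlocks_zero_neg_inv_mul_self {α : Type*} [CommRing α] {D : Matrix n n α}
    (hD : IsUnit D.det) :
    fromBlocks 0 (-D⁻¹) D 0 * fromBlocks 0 (-D⁻¹) D 0 = -1 := by
  rw [fromBlocks_multiply, ← fromBlocks_one, fromBlocks_neg]
  simp [nonsing_inv_mul D hD, mul_nonsing_inv D hD]

theorem posSemidef_fromBlocks_self_inv_iff {𝕜 : Type*} [RCLike 𝕜] {D : Matrix n n 𝕜}
    (hD : IsUnit D) :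
    (fromBlocks D 0 0 D⁻¹).PosSemidef ↔ D.PosDef := by
  refine ⟨fun h => (h.submatrix Sum.inl).posDef_iff_isUnit.mpr hD, fun h => ?_⟩
  have := hD.invertible
  have hschur := h.fromBlocks₁₁ (0 : Matrix n n 𝕜) D⁻¹
  rw [conjTranspose_zero] at hschur
  exact hschur.mpr (by simpa using h.inv.posSemidef)

end Blocks

section Symplectic

variable {s : ℕ}

theorem transpose_symplB : (SymplB s)ᵀ = -SymplB s := by
  simp [SymplB, fromBlocks_transpose, fromBlocks_neg]

theorem inv_symplB : (SymplB s)⁻¹ = fromBlocks 0 (-1) 1 0 := by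
  apply inv_eq_right_inv
  rw [SymplB, fromBlocks_multiply, ← fromBlocks_one]
  simp

theorem symplB_mul_fromBlocks (A B C D : Matrix (Fin s) (Fin s) ℝ) :
    SymplB s * fromBlocks A B C D = fromBlocks C D (-A) (-B) := by
  simp [SymplB, fromBlocks_multiply]

theorem symplB_mul_eq_neg_transpose_mul_symplB_iff
    (J : Matrix (Fin s ⊕ Fin s) (Fin s ⊕ Fin s) ℝ) :
    SymplB s * J = -(Jᵀ * SymplB s) ↔ (SymplB s * J).IsSymm := by
  rw [IsSymm, transpose_mul, transpose_symplB, Matrix.mul_neg, eq_comm]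

theorem isComplexStructureB_iff (J : Matrix (Fin s ⊕ Fin s) (Fin s ⊕ Fin s) ℝ) :
    IsComplexStructureB J ↔ J * J = -1 ∧ (SymplB s * J).PosSemidef := by
  rw [IsComplexStructureB, symplB_mul_eq_neg_transpose_mul_symplB_iff]
  exact and_congr_right' ⟨And.right, fun h => ⟨h.isHermitian, h⟩⟩

theorem fromBlocks_one_mul_inv_symplB_mul_inv {D : Matrix (Fin s) (Fin s) ℝ}
    (hD : IsUnit D.det) :
    fromBlocks (1 : Matrix (Fin s) (Fin s) ℝ) 0 0 D * (SymplB s)⁻¹ *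
      (fromBlocks 1 0 0 D)⁻¹ = fromBlocks 0 (-D⁻¹) D 0 := by
  have hK : (fromBlocks (1 : Matrix (Fin s) (Fin s) ℝ) 0 0 D)⁻¹ = fromBlocks 1 0 0 D⁻¹ := by
    rw [inv_fromBlocks_zero₁₂_of_isUnit_iff _ _ _
      (iff_of_true isUnit_one ((isUnit_iff_isUnit_det D).mpr hD))]
    simp
  rw [inv_symplB, hK, fromBlocks_multiply, fromBlocks_multiply]
  simp

end Symplectic

/-- Let `J_B = Δ⁻¹` be the canonical complex structure, `D` an
invertible real `s×s` matrix and `K = [[I,0],[0,D]]`.  Then `K J_B K⁻¹` is a complex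
structure with respect to `Δ` if and only if `D` is symmetric and positive definite.
In particular, for `s ≥ 2` and nonsymmetric `D` the corresponding nondegenerate
Gaussian channel is not gauge-covariant with respect to this candidate input complex
structure. -/
theorem blockDiag_conj_complexStructure_iff (s : ℕ)
    (D : Matrix (Fin s) (Fin s) ℝ) (hD : IsUnit D.det) :
    IsComplexStructureB
      ((Matrix.fromBlocks 1 0 0 D) * (SymplB s)⁻¹ * (Matrix.fromBlocks 1 0 0 D)⁻¹) ↔
    (D.IsSymm ∧ D.PosDef) := by
  rw [fromBlocks_one_mul_inv_symplB_mul_inv hD, isComplexStructureB_iff,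
    symplB_mul_fromBlocks, neg_zero, neg_neg,
    posSemidef_fromBlocks_self_inv_iff ((isUnit_iff_isUnit_det D).mpr hD)]
  exact ⟨fun ⟨_, hpd⟩ => ⟨hpd.isHermitian, hpd⟩,
    fun ⟨_, hpd⟩ => ⟨fromBlocks_zero_neg_inv_mul_self hD, hpd⟩⟩
end

section
/- Let k > 0, μ₁ > 0, μ₂ > 0, and let E be a real number satisfying the threshold condition E ≥ (1/2)[η + η⁻¹ + |η − η⁻¹|(1 + (2/k²)√(μ₁μ₂))], where η = √(μ₂/μ₁). Then the maximum of the function (α₁, α₂) ↦ (μ₁ + k²α₁)(μ₂ + k²α₂) over the set {(α₁, α₂) : α₁ > 0, α₂ > 0, α₁ + α₂ ≤ E, α₁α₂ ≥ 1/4} equals ((k²E + μ₁ + μ₂)/2)², and it is attained at α₁⁰ = E/2 + (μ₂ − μ₁)/(2k²), α₂⁰ = E/2 − (μ₂ − μ₁)/(2k²). -/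
/-! With `Δ = μ₂ - μ₁`, the identity `|η - η⁻¹| √(μ₁μ₂) = |Δ|` and `η + η⁻¹ ≥ 2` turn the
threshold condition into `1 + |Δ|/k² ≤ E`, which is exactly what makes the symmetric split
`E/2 ± Δ/(2k²)` admissible. At that point both factors equal `(k²E + μ₁ + μ₂)/2`, and for any
admissible pair AM-GM bounds the product by the square of half the sum of the factors, which is
at most `(k²E + μ₁ + μ₂)/2`. -/

open Real

lemma sqrt_div_mul_sqrt_mul {a b : ℝ} (ha : 0 < a) (hb : 0 ≤ b) : √(b / a) * √(a * b) = b := by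
  rw [← sqrt_mul (div_nonneg hb ha.le), show b / a * (a * b) = b ^ 2 by field_simp,
    sqrt_sq hb]

lemma inv_sqrt_div_mul_sqrt_mul {a b : ℝ} (ha : 0 ≤ a) (hb : 0 < b) :
    (√(b / a))⁻¹ * √(a * b) = a := by
  rw [← sqrt_inv, inv_div, mul_comm a b]
  exact sqrt_div_mul_sqrt_mul hb ha

lemma abs_sqrt_div_sub_inv_mul_sqrt_mul {a b : ℝ} (ha : 0 < a) (hb : 0 < b) :
    |√(b / a) - (√(b / a))⁻¹| * √(a * b) = |b - a| := by
  have h : (√(b / a) - (√(b / a))⁻¹) * √(a * b) = b - a := by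
    rw [sub_mul, sqrt_div_mul_sqrt_mul ha hb.le, inv_sqrt_div_mul_sqrt_mul ha.le hb]
  rw [← h, abs_mul, abs_of_nonneg (sqrt_nonneg _)]

lemma two_le_add_inv {x : ℝ} (hx : 0 < x) : 2 ≤ x + x⁻¹ := by
  have hinv : x * x⁻¹ = 1 := mul_inv_cancel₀ hx.ne'
  nlinarith [sq_nonneg (x - 1), inv_pos.mpr hx]

lemma one_add_abs_sub_div_le_of_threshold {k μ₁ μ₂ E : ℝ} (h1 : 0 < μ₁) (h2 : 0 < μ₂)
    (hE : (1/2) * (√(μ₂ / μ₁) + (√(μ₂ / μ₁))⁻¹ +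
      |√(μ₂ / μ₁) - (√(μ₂ / μ₁))⁻¹| * (1 + (2 / k^2) * √(μ₁ * μ₂))) ≤ E) :
    1 + |μ₂ - μ₁| / k^2 ≤ E := by
  have hAM := two_le_add_inv (sqrt_pos.mpr (div_pos h2 h1))
  have hcross := abs_sqrt_div_sub_inv_mul_sqrt_mul h1 h2
  set A := |√(μ₂ / μ₁) - (√(μ₂ / μ₁))⁻¹|
  have hA : 0 ≤ A := abs_nonneg _
  have hexpand : (1/2) * (√(μ₂ / μ₁) + (√(μ₂ / μ₁))⁻¹ + A * (1 + (2 / k^2) * √(μ₁ * μ₂))) =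
      (1/2) * (√(μ₂ / μ₁) + (√(μ₂ / μ₁))⁻¹) + A / 2 + A * √(μ₁ * μ₂) / k^2 := by ring
  rw [← hcross]
  linarith

lemma symmetric_split_admissible {E δ : ℝ} (h : 1 + 2 * |δ| ≤ E) :
    0 < E/2 + δ ∧ 0 < E/2 - δ ∧ (1:ℝ)/4 ≤ (E/2 + δ) * (E/2 - δ) := by
  have hle := le_abs_self δ
  have hge := neg_abs_le δ
  refine ⟨by linarith, by linarith, ?_⟩
  nlinarith [abs_nonneg δ, sq_abs δ]

lemma mul_le_sq_half_of_add_le {x y s : ℝ} (hxy : 0 ≤ x + y) (h : x + y ≤ s) :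
    x * y ≤ (s / 2) ^ 2 := by
  have hsq : ((x + y) / 2) ^ 2 ≤ (s / 2) ^ 2 := by gcongr
  nlinarith [four_mul_le_sq_add x y]

/-- Under the threshold condition
`E ≥ (1/2)[η + η⁻¹ + |η - η⁻¹|(1 + (2/k²)√(μ₁μ₂))]` with `η = √(μ₂/μ₁)`, the maximum of
`(α₁,α₂) ↦ (μ₁ + k²α₁)(μ₂ + k²α₂)` over
`{(α₁,α₂) : α₁ > 0, α₂ > 0, α₁ + α₂ ≤ E, α₁α₂ ≥ 1/4}` equals `((k²E + μ₁ + μ₂)/2)²`,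
attained at `α₁⁰ = E/2 + (μ₂ - μ₁)/(2k²)`, `α₂⁰ = E/2 - (μ₂ - μ₁)/(2k²)`. -/
theorem squeezed_noise_max (k μ₁ μ₂ E η : ℝ)
    (hk : 0 < k) (h1 : 0 < μ₁) (h2 : 0 < μ₂)
    (hη : η = Real.sqrt (μ₂ / μ₁))
    (hE : (1/2) * (η + η⁻¹ + |η - η⁻¹| * (1 + (2 / k^2) * Real.sqrt (μ₁ * μ₂))) ≤ E) :
    (0 < E/2 + (μ₂ - μ₁)/(2*k^2) ∧ 0 < E/2 - (μ₂ - μ₁)/(2*k^2) ∧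
      (E/2 + (μ₂ - μ₁)/(2*k^2)) + (E/2 - (μ₂ - μ₁)/(2*k^2)) ≤ E ∧
      (1:ℝ)/4 ≤ (E/2 + (μ₂ - μ₁)/(2*k^2)) * (E/2 - (μ₂ - μ₁)/(2*k^2))) ∧
    (μ₁ + k^2 * (E/2 + (μ₂ - μ₁)/(2*k^2))) * (μ₂ + k^2 * (E/2 - (μ₂ - μ₁)/(2*k^2))) =
      ((k^2 * E + μ₁ + μ₂)/2)^2 ∧
    (∀ α₁ α₂ : ℝ, 0 < α₁ → 0 < α₂ → α₁ + α₂ ≤ E → (1:ℝ)/4 ≤ α₁ * α₂ →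
      (μ₁ + k^2 * α₁) * (μ₂ + k^2 * α₂) ≤ ((k^2 * E + μ₁ + μ₂)/2)^2) := by
  subst hη
  have hthreshold := one_add_abs_sub_div_le_of_threshold h1 h2 hE
  have hsplit : 1 + 2 * |(μ₂ - μ₁) / (2 * k^2)| ≤ E := by
    have hhalve : 2 * (|μ₂ - μ₁| / (2 * k^2)) = |μ₂ - μ₁| / k^2 := by field_simp
    rwa [abs_div, abs_of_pos (by positivity : (0:ℝ) < 2 * k^2), hhalve]
  obtain ⟨hpos₁, hpos₂, hprod⟩ := symmetric_split_admissible hsplit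
  refine ⟨⟨hpos₁, hpos₂, le_of_eq (by ring), hprod⟩, by field_simp; ring, ?_⟩
  intro α₁ α₂ hα₁ hα₂ hsum _
  have hscaled : k^2 * (α₁ + α₂) ≤ k^2 * E := mul_le_mul_of_nonneg_left hsum (sq_nonneg k)
  exact mul_le_sq_half_of_add_le (by positivity) (by linarith)
end

section
/- Let k > 0, μ₁ > 0, μ₂ > 0, set η = √(μ₂/μ₁), α₁⁰ = E/2 + (μ₂ − μ₁)/(2k²), and α₂⁰ = E/2 − (μ₂ − μ₁)/(2k²). Then the two inequalities α₁⁰ ≥ (1/2)√(μ₁/μ₂) and α₂⁰ ≥ (1/2)√(μ₂/μ₁) hold simultaneously if and only if E ≥ (1/2)[η + η⁻¹ + |η − η⁻¹|(1 + (2/k²)√(μ₁μ₂))]. Moreover, when these inequalities hold one also has α₁⁰α₂⁰ ≥ 1/4. -/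
/-- With `η = √(μ₂/μ₁)`, `α₁⁰ = E/2 + (μ₂-μ₁)/(2k²)`,
`α₂⁰ = E/2 - (μ₂-μ₁)/(2k²)`, the inequalities `α₁⁰ ≥ (1/2)√(μ₁/μ₂)` and
`α₂⁰ ≥ (1/2)√(μ₂/μ₁)` hold simultaneously if and only if
`E ≥ (1/2)[η + η⁻¹ + |η - η⁻¹|(1 + (2/k²)√(μ₁μ₂))]`; moreover when they hold one also
has `α₁⁰α₂⁰ ≥ 1/4`. -/
theorem squeezed_noise_threshold (k μ₁ μ₂ E η α₁ α₂ : ℝ)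
    (hk : 0 < k) (h1 : 0 < μ₁) (h2 : 0 < μ₂)
    (hη : η = Real.sqrt (μ₂ / μ₁))
    (ha1 : α₁ = E/2 + (μ₂ - μ₁)/(2*k^2))
    (ha2 : α₂ = E/2 - (μ₂ - μ₁)/(2*k^2)) :
    (((1/2) * Real.sqrt (μ₁ / μ₂) ≤ α₁ ∧ (1/2) * Real.sqrt (μ₂ / μ₁) ≤ α₂) ↔
      (1/2) * (η + η⁻¹ + |η - η⁻¹| * (1 + (2 / k^2) * Real.sqrt (μ₁ * μ₂))) ≤ E) ∧
    (((1/2) * Real.sqrt (μ₁ / μ₂) ≤ α₁ ∧ (1/2) * Real.sqrt (μ₂ / μ₁) ≤ α₂) →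
      (1:ℝ)/4 ≤ α₁ * α₂) := by
  have ha : (0:ℝ) < Real.sqrt μ₁ := Real.sqrt_pos.2 h1
  have hb : (0:ℝ) < Real.sqrt μ₂ := Real.sqrt_pos.2 h2
  set a := Real.sqrt μ₁ with hadef
  set b := Real.sqrt μ₂ with hbdef
  have ha2' : a^2 = μ₁ := Real.sq_sqrt h1.le
  have hb2' : b^2 = μ₂ := Real.sq_sqrt h2.le
  have h12 : Real.sqrt (μ₁/μ₂) = a/b := Real.sqrt_div h1.le μ₂
  have h21 : Real.sqrt (μ₂/μ₁) = b/a := Real.sqrt_div h2.le μ₁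
  have habm : Real.sqrt (μ₁*μ₂) = a*b := Real.sqrt_mul h1.le μ₂
  have hη' : η = b/a := by rw [hη, h21]
  have hinv : η⁻¹ = a/b := by rw [hη', inv_div]
  have hk2 : (0:ℝ) < k^2 := by positivity
  have hkey : (b/a - a/b) * (a*b) = μ₂ - μ₁ := by
    field_simp
    nlinarith [ha2', hb2']
  set w : ℝ := (μ₂ - μ₁)/k^2 with hwdef
  have hα1 : ((1/2) * Real.sqrt (μ₁/μ₂) ≤ α₁) ↔ a/b - w ≤ E := by
    rw [h12, ha1]
    have : (μ₂ - μ₁)/(2*k^2) = w/2 := by rw [hwdef]; ring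
    rw [this]; constructor <;> intro h <;> linarith
  have hα2 : ((1/2) * Real.sqrt (μ₂/μ₁) ≤ α₂) ↔ b/a + w ≤ E := by
    rw [h21, ha2]
    have : (μ₂ - μ₁)/(2*k^2) = w/2 := by rw [hwdef]; ring
    rw [this]; constructor <;> intro h <;> linarith
  constructor
  · rw [hα1, hα2, hη', inv_div, habm]
    rcases abs_cases (b/a - a/b) with ⟨habs, hsgn⟩ | ⟨habs, hsgn⟩
    · have hw : 0 ≤ w := by
        rw [hwdef]
        apply div_nonneg _ hk2.le
        nlinarith [mul_pos ha hb]
      have hRHS : (1/2) * (b/a + a/b + |b/a - a/b| * (1 + (2/k^2) * (a*b))) = b/a + w := by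
        rw [habs, hwdef]
        linear_combination (1/k^2) * hkey
      rw [hRHS]
      constructor
      · rintro ⟨_, h2'⟩; exact h2'
      · intro h; exact ⟨by linarith, h⟩
    · have hw : w ≤ 0 := by
        rw [hwdef]
        apply div_nonpos_of_nonpos_of_nonneg _ hk2.le
        nlinarith [mul_pos ha hb]
      have hRHS : (1/2) * (b/a + a/b + |b/a - a/b| * (1 + (2/k^2) * (a*b))) = a/b - w := by
        rw [habs, hwdef]
        linear_combination (-(1:ℝ)/k^2) * hkey
      rw [hRHS]
      constructor
      · rintro ⟨h1', _⟩; exact h1'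
      · intro h; exact ⟨h, by linarith⟩
  · rintro ⟨hx1, hx2⟩
    rw [h12] at hx1; rw [h21] at hx2
    have hpos1 : (0:ℝ) < (1/2) * (a/b) := by positivity
    have hpos2 : (0:ℝ) < (1/2) * (b/a) := by positivity
    have hmul := mul_le_mul hx1 hx2 hpos2.le (le_trans hpos1.le hx1)
    have hone : ((1/2) * (a/b)) * ((1/2) * (b/a)) = 1/4 := by
      field_simp
      ring
    linarith
end
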